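/- Let G be an infinite graph which has pairwise-disjoint ruling sets F_n (n ∈ ℕ) satisfying |F_n| ≤ log₂(n) for all sufficiently large n. Then in the Rado coloring of K_ℕ, every monochromatic copy of G has vertex set of upper density 0. -/

import Mathlib

open Filter

open scoped Classical in
noncomputable def upperDensity (S : Set ℕ) : ℝ :=
  Filter.limsup (fun t : ℕ => (((Finset.range t).filter (fun n => n ∈ S)).card : ℝ) / t)
    Filter.atTop

/-- The Rado coloring of the edge `{s,t}`: for `s < t` it is the `s`-th bit of the
binary expansion of `t` (as a `Bool`). -/
def radoColor (s t : ℕ) : Bool :=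
  if s < t then t.testBit s else s.testBit t

/-- `X` is a ruling set in `G`: `X` is finite and all but finitely many vertices
outside `X` have a neighbor in `X`. -/
def IsRulingSet {V : Type*} (G : SimpleGraph V) (X : Set V) : Prop :=
  X.Finite ∧ {v : V | v ∉ X ∧ ∀ x ∈ X, ¬ G.Adj v x}.Finite

/-!
Fix a window of indices `a ≤ n ≤ K` and let `S n = f '' F n`; these are disjoint finite sets of
binary positions. All but finitely many vertices `v` have a neighbour in every `F n`, and once
`f v` exceeds every position in the `S n`, the Rado colouring of those edges says that for each
`n` some digit of `f v` at a position of `S n` equals `i`. Digits at disjoint positions are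
independent, so among the numbers below a power of two at most a proportion
`∏ (1 - 2 ^ (-|S n|)) ≤ ∏ (1 - 1 / n) = (a - 1) / K` have this property, and `K` is arbitrary.
-/

open Finset

theorem one_sub_inv_two_pow_nonneg (k : ℕ) : 0 ≤ 1 - ((2 : ℝ) ^ k)⁻¹ :=
  sub_nonneg.2 (inv_le_one_of_one_le₀ (one_le_pow₀ one_le_two))

open scoped Classical in
theorem upperDensity_nonneg (S : Set ℕ) : 0 ≤ upperDensity S := by
  refine le_limsup_of_frequently_le (Frequently.of_forall fun t => by positivity)
    ⟨1, eventually_map.2 (Eventually.of_forall fun t => ?_)⟩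
  rcases t.eq_zero_or_pos with rfl | ht
  · simp
  · exact div_le_one_of_le₀ (by exact_mod_cast (card_filter_le _ _).trans (card_range t).le)
      (Nat.cast_nonneg t)

open scoped Classical in
theorem upperDensity_le_of_eventually_le {S : Set ℕ} {c : ℝ}
    (h : ∀ δ > 0, ∀ᶠ t : ℕ in atTop, (#{n ∈ range t | n ∈ S} : ℝ) / t ≤ c + δ) :
    upperDensity S ≤ c :=
  le_of_forall_pos_le_add fun δ hδ =>
    limsup_le_of_le (isCoboundedUnder_le_of_le atTop fun t => by positivity) (h δ hδ)

section BitCount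

variable {α ι : Type*} [Fintype α] [DecidableEq α]

theorem card_le_two_pow_mul_card_filter_forall_eq (A : Finset (α → Bool)) (T : Finset α)
    (c : Bool) (hA : ∀ g ∈ A, (fun x => if x ∈ T then c else g x) ∈ A) :
    #A ≤ 2 ^ #T * #{g ∈ A | ∀ x ∈ T, g x = c} := by
  refine card_le_mul_card_image_of_maps_to (f := fun g x => if x ∈ T then c else g x)
    (fun g hg => mem_filter.2 ⟨hA g hg, fun x hx => if_pos hx⟩) _ fun h _ => ?_
  calc #{g ∈ A | (fun x => if x ∈ T then c else g x) = h}
      ≤ #(univ : Finset (T → Bool)) := by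
        refine card_le_card_of_injOn (fun g x => g x) (fun _ _ => mem_coe.2 (mem_univ _)) ?_
        intro g₁ hg₁ g₂ hg₂ hT
        funext x
        by_cases hx : x ∈ T
        · exact congrFun hT ⟨x, hx⟩
        · have := congrFun ((mem_filter.1 hg₁).2.trans (mem_filter.1 hg₂).2.symm) x
          simpa [hx] using this
    _ = 2 ^ #T := by simp

theorem card_filter_forall_exists_eq_le (b : Bool) (S : ι → Finset α) (J : Finset ι)
    (hS : (J : Set ι).PairwiseDisjoint S) :
    (#{g : α → Bool | ∀ j ∈ J, ∃ x ∈ S j, g x = b} : ℝ)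
      ≤ 2 ^ Fintype.card α * ∏ j ∈ J, (1 - ((2 : ℝ) ^ #(S j))⁻¹) := by
  classical
  induction J using Finset.induction_on with
  | empty => simp
  | @insert a J ha ih =>
    set A : Finset (α → Bool) := {g | ∀ j ∈ J, ∃ x ∈ S j, g x = b}
    have hsplit : #{g : α → Bool | ∀ j ∈ insert a J, ∃ x ∈ S j, g x = b}
        + #{g ∈ A | ∀ x ∈ S a, g x = !b} = #A := by
      rw [← card_filter_add_card_filter_not (s := A) (fun g => ∃ x ∈ S a, g x = b)]
      congr 2
      · ext g; simp [A, and_comm]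
      · ext g; simp [A, Bool.eq_not]
    have hoverwrite : ∀ g ∈ A, (fun x => if x ∈ S a then !b else g x) ∈ A := by
      intro g hg
      simp only [A, mem_filter, mem_univ, true_and] at hg ⊢
      intro j hj
      obtain ⟨x, hx, hgx⟩ := hg j hj
      have hxa : x ∉ S a := disjoint_right.1
        (hS (mem_insert_self a J) (mem_insert_of_mem hj) (ne_of_mem_of_not_mem hj ha).symm) hx
      exact ⟨x, hx, by simpa [hxa] using hgx⟩
    have hbad := card_le_two_pow_mul_card_filter_forall_eq A (S a) (!b) hoverwrite
    have hA := ih (hS.subset (by simp))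
    have hpow : (0 : ℝ) < 2 ^ #(S a) := by positivity
    have hbadR : (#A : ℝ) ≤ 2 ^ #(S a) * #{g ∈ A | ∀ x ∈ S a, g x = !b} := by exact_mod_cast hbad
    have hsplitR := congrArg (Nat.cast (R := ℝ)) hsplit
    push_cast at hsplitR
    calc _ = (#A : ℝ) - #{g ∈ A | ∀ x ∈ S a, g x = !b} := by linarith
      _ ≤ (1 - ((2 : ℝ) ^ #(S a))⁻¹) * #A := by
        have := (inv_mul_le_iff₀ hpow).2 hbadR
        linarith
      _ ≤ _ := by
        rw [prod_insert ha, mul_left_comm]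
        exact mul_le_mul_of_nonneg_left hA (one_sub_inv_two_pow_nonneg _)

theorem card_filter_range_two_pow_testBit_le (B : ℕ) (b : Bool) (S : ι → Finset ℕ)
    (J : Finset ι) (hS : (J : Set ι).PairwiseDisjoint S) (hB : ∀ j ∈ J, ∀ s ∈ S j, s < B) :
    (#{m ∈ range (2 ^ B) | ∀ j ∈ J, ∃ s ∈ S j, m.testBit s = b} : ℝ)
      ≤ 2 ^ B * ∏ j ∈ J, (1 - ((2 : ℝ) ^ #(S j))⁻¹) := by
  let S' : ι → Finset (Fin B) := fun j => (S j).preimage Fin.val Fin.val_injective.injOn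
  have hS' : (J : Set ι).PairwiseDisjoint S' := fun j hj k hk hjk =>
    disjoint_left.2 fun x hxj hxk =>
      disjoint_left.1 (hS hj hk hjk) (mem_preimage.1 hxj) (mem_preimage.1 hxk)
  have hcard : ∀ j ∈ J, #(S' j) = #(S j) := fun j hj => by
    rw [card_preimage, filter_true_of_mem fun s hs => ⟨⟨s, hB j hj s hs⟩, rfl⟩]
  -- The filter over `Fin B → Bool` is taken from the general lemma: written out here, `∃ x ∈ S' j`
  -- would be decided by `Nat.decidableExistsFin` and no longer match it.
  refine (Nat.cast_le.2 ?_).trans ((card_filter_forall_exists_eq_le b S' J hS').trans_eq ?_)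
  · refine card_le_card_of_injOn (fun m x => m.testBit x) ?_ ?_
    · intro m hm
      simp only [coe_filter, mem_range, Set.mem_ofPred_eq] at hm
      simp only [coe_filter, mem_univ, true_and, Set.mem_ofPred_eq, S', mem_preimage]
      intro j hj
      obtain ⟨s, hs, hbit⟩ := hm.2 j hj
      exact ⟨⟨s, hB j hj s hs⟩, hs, hbit⟩
    · intro m₁ h₁ m₂ h₂ heq
      simp only [coe_filter, mem_range, Set.mem_ofPred_eq] at h₁ h₂
      refine Nat.eq_of_testBit_eq fun s => ?_
      by_cases hs : s < B
      · exact congrFun heq ⟨s, hs⟩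
      · have hle : 2 ^ B ≤ 2 ^ s := Nat.pow_le_pow_right two_pos (not_lt.1 hs)
        rw [Nat.testBit_eq_false_of_lt (h₁.1.trans_le hle),
          Nat.testBit_eq_false_of_lt (h₂.1.trans_le hle)]
  · rw [Fintype.card_fin, prod_congr rfl fun j hj => by rw [hcard j hj]]

theorem card_filter_range_testBit_le {M t : ℕ} (b : Bool) (S : ι → Finset ℕ) (J : Finset ι)
    (hS : (J : Set ι).PairwiseDisjoint S) (hM : ∀ j ∈ J, ∀ s ∈ S j, s < M) (ht : 2 ^ M ≤ t) :
    (#{m ∈ range t | ∀ j ∈ J, ∃ s ∈ S j, m.testBit s = b} : ℝ)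
      ≤ 2 * t * ∏ j ∈ J, (1 - ((2 : ℝ) ^ #(S j))⁻¹) := by
  have ht0 : t ≠ 0 := Nat.one_le_iff_ne_zero.1 (Nat.one_le_two_pow.trans ht)
  have hMlog : M ≤ Nat.log 2 t := Nat.le_log_of_pow_le one_lt_two ht
  have htB : t ≤ 2 ^ (Nat.log 2 t + 1) := (Nat.lt_pow_succ_log_self one_lt_two t).le
  have hBt : (2 : ℝ) ^ (Nat.log 2 t + 1) ≤ 2 * t := by
    rw [pow_succ']
    exact_mod_cast Nat.mul_le_mul_left 2 (Nat.pow_log_le_self 2 ht0)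
  calc (#{m ∈ range t | ∀ j ∈ J, ∃ s ∈ S j, m.testBit s = b} : ℝ)
      ≤ #{m ∈ range (2 ^ (Nat.log 2 t + 1)) | ∀ j ∈ J, ∃ s ∈ S j, m.testBit s = b} := by
        gcongr
    _ ≤ 2 ^ (Nat.log 2 t + 1) * ∏ j ∈ J, (1 - ((2 : ℝ) ^ #(S j))⁻¹) :=
        card_filter_range_two_pow_testBit_le _ b S J hS fun j hj s hs => by
          have := hM j hj s hs; omega
    _ ≤ 2 * t * ∏ j ∈ J, (1 - ((2 : ℝ) ^ #(S j))⁻¹) :=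
        mul_le_mul_of_nonneg_right hBt (prod_nonneg fun j _ => one_sub_inv_two_pow_nonneg _)

open scoped Classical in
theorem upperDensity_le_of_eventually_forall_exists_testBit {A : Set ℕ} (b : Bool)
    (S : ι → Finset ℕ) (J : Finset ι) (hS : (J : Set ι).PairwiseDisjoint S)
    (hA : ∀ᶠ m in atTop, m ∈ A → ∀ j ∈ J, ∃ s ∈ S j, m.testBit s = b) :
    upperDensity A ≤ 2 * ∏ j ∈ J, (1 - ((2 : ℝ) ^ #(S j))⁻¹) := by
  obtain ⟨m₀, hm₀⟩ := eventually_atTop.1 hA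
  obtain ⟨M, hM⟩ := exists_nat_subset_range (J.biUnion S)
  refine upperDensity_le_of_eventually_le fun δ hδ => ?_
  filter_upwards [eventually_ge_atTop (2 ^ M),
    (tendsto_const_div_atTop_nhds_zero_nat (m₀ : ℝ)).eventually_le_const hδ] with t ht hm₀t
  have ht0 : (0 : ℝ) < t := by exact_mod_cast Nat.one_le_two_pow.trans ht
  have hsub : {n ∈ range t | n ∈ A}
      ⊆ range m₀ ∪ {m ∈ range t | ∀ j ∈ J, ∃ s ∈ S j, m.testBit s = b} := by
    intro n hn
    rw [mem_filter] at hn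
    rw [mem_union, mem_range, mem_filter]
    by_cases hn₀ : n < m₀
    · exact Or.inl hn₀
    · exact Or.inr ⟨hn.1, hm₀ n (not_lt.1 hn₀) hn.2⟩
  have hcount := card_filter_range_testBit_le b S J hS
    (fun j hj s hs => mem_range.1 (hM (mem_biUnion.2 ⟨j, hj, hs⟩))) ht
  have hcard : (#{n ∈ range t | n ∈ A} : ℝ)
      ≤ m₀ + #{m ∈ range t | ∀ j ∈ J, ∃ s ∈ S j, m.testBit s = b} := by
    exact_mod_cast (card_le_card hsub).trans ((card_union_le _ _).trans_eq (by rw [card_range]))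
  rw [div_le_iff₀ ht0]
  rw [div_le_iff₀ ht0] at hm₀t
  linarith

end BitCount

theorem prod_Icc_one_sub_inv {a K : ℕ} (ha : 1 ≤ a) (haK : a ≤ K) :
    ∏ n ∈ Icc a K, (1 - (n : ℝ)⁻¹) = (a - 1) / K := by
  induction K, haK using Nat.le_induction with
  | base =>
    have : (a : ℝ) ≠ 0 := by positivity
    rw [Icc_self, prod_singleton]
    field_simp
  | succ K hK ih =>
    have : (K : ℝ) ≠ 0 := by have := ha.trans hK; positivity
    rw [prod_Icc_succ_top (by omega), ih]
    push_cast
    field_simp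
    ring

theorem two_pow_le_of_le_logb {k n : ℕ} (hn : 0 < n) (h : (k : ℝ) ≤ Real.logb 2 n) :
    (2 : ℝ) ^ k ≤ n := by
  rw [Real.le_logb_iff_rpow_le one_lt_two (by exact_mod_cast hn), Real.rpow_natCast] at h
  exact h

theorem radoColor_eq_testBit_of_lt {s t : ℕ} (h : t < s) : radoColor s t = s.testBit t := by
  rw [radoColor, if_neg h.not_gt]

section RulingSets

variable {V ι : Type*} {G : SimpleGraph V}

theorem IsRulingSet.finite_setOf_forall_not_adj {X : Set V} (h : IsRulingSet G X) :
    {v | ∀ x ∈ X, ¬ G.Adj v x}.Finite :=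
  (h.1.union h.2).subset fun v hv => by
    by_cases hvX : v ∈ X
    · exact Or.inl hvX
    · exact Or.inr ⟨hvX, hv⟩

theorem finite_setOf_not_forall_exists_adj {F : ι → Set V} (J : Finset ι)
    (hF : ∀ j ∈ J, IsRulingSet G (F j)) :
    {v | ¬ ∀ j ∈ J, ∃ x ∈ F j, G.Adj v x}.Finite := by
  refine (J.finite_toSet.biUnion fun j hj => (hF j hj).finite_setOf_forall_not_adj).subset ?_
  intro v hv
  push Not at hv
  obtain ⟨j, hj, hvj⟩ := hv
  exact Set.mem_biUnion hj hvj

theorem eventually_forall_exists_testBit_eq {F : ι → Set V} (J : Finset ι)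
    (hF : ∀ j ∈ J, IsRulingSet G (F j)) {i : Bool} {f : V → ℕ}
    (hmono : ∀ u v : V, G.Adj u v → radoColor (f u) (f v) = i) :
    ∀ᶠ m in atTop, m ∈ Set.range f → ∀ j ∈ J, ∃ s ∈ f '' F j, m.testBit s = i := by
  obtain ⟨M, hM⟩ := ((J.finite_toSet.biUnion fun j hj => (hF j hj).1).image f).bddAbove
  have hfar : ∀ᶠ m in atTop, m ∉ f '' {v | ¬ ∀ j ∈ J, ∃ x ∈ F j, G.Adj v x} := by
    rw [← Nat.cofinite_eq_atTop]
    exact ((finite_setOf_not_forall_exists_adj J hF).image f).eventually_cofinite_notMem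
  filter_upwards [hfar, eventually_gt_atTop M] with m hm hMm
  rintro ⟨v, rfl⟩ j hj
  obtain ⟨x, hx, hvx⟩ := not_not.1 (fun h => hm (Set.mem_image_of_mem f h)) j hj
  have hlt : f x < f v := (hM ⟨x, Set.mem_biUnion hj hx, rfl⟩).trans_lt hMm
  exact ⟨f x, Set.mem_image_of_mem f hx, radoColor_eq_testBit_of_lt hlt ▸ hmono v x hvx⟩

end RulingSets

theorem stmt_5_general {V : Type*} (G : SimpleGraph V)
    (F : ℕ → Set V) (hrul : ∀ n, IsRulingSet G (F n))
    (hdisj : Pairwise (Function.onFun Disjoint F))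
    (hsize : ∃ N : ℕ, ∀ n ≥ N, ((F n).ncard : ℝ) ≤ Real.logb 2 n)
    (i : Bool) (f : V → ℕ) (hinj : Function.Injective f)
    (hmono : ∀ u v : V, G.Adj u v → radoColor (f u) (f v) = i) :
    upperDensity (Set.range f) = 0 := by
  obtain ⟨N, hN⟩ := hsize
  refine le_antisymm (le_of_forall_pos_le_add fun δ hδ => ?_) (upperDensity_nonneg _)
  set a := max N 2
  obtain ⟨K, hK⟩ := exists_nat_ge (max (a : ℝ) (2 * a / δ))
  have haK : a ≤ K := by exact_mod_cast (le_max_left _ _).trans hK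
  have hK0 : (0 : ℝ) < K := by exact_mod_cast (two_pos.trans_le (le_max_right N 2)).trans_le haK
  let S n := (hrul n).1.toFinset.image f
  have hS : ((Icc a K : Finset ℕ) : Set ℕ).PairwiseDisjoint S := fun m _ n _ hmn =>
    (disjoint_image hinj).2 (by simpa using hdisj hmn)
  have hSF : ∀ n, (S n : Set ℕ) = f '' F n := fun n => by simp [S]
  calc upperDensity (Set.range f) ≤ 2 * ∏ n ∈ Icc a K, (1 - ((2 : ℝ) ^ #(S n))⁻¹) :=
        upperDensity_le_of_eventually_forall_exists_testBit i S _ hS <|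
          (eventually_forall_exists_testBit_eq _ (fun n _ => hrul n) hmono).mono
            fun m hm hmf n hn => by simpa [← hSF] using hm hmf n hn
    _ ≤ 2 * ∏ n ∈ Icc a K, (1 - (n : ℝ)⁻¹) := by
        gcongr with n hn
        · exact fun n _ => one_sub_inv_two_pow_nonneg _
        · have hn' := mem_Icc.1 hn
          have hcard : #(S n) = (F n).ncard := by
            rw [card_image_of_injective _ hinj, Set.ncard_eq_toFinset_card _ (hrul n).1]
          exact two_pow_le_of_le_logb (by omega) (hcard ▸ hN n (by omega))
    _ = 2 * ((a - 1) / K) := by rw [prod_Icc_one_sub_inv (by omega) haK]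
    _ ≤ 0 + δ := by
        rw [zero_add, ← mul_div_assoc, div_le_iff₀ hK0]
        have := (div_le_iff₀ hδ).1 ((le_max_right _ _).trans hK)
        linarith

theorem stmt_5 {V : Type*} [Countable V] [Infinite V] (G : SimpleGraph V)
    (F : ℕ → Set V) (hrul : ∀ n, IsRulingSet G (F n))
    (hdisj : Pairwise (Function.onFun Disjoint F))
    (hsize : ∃ N : ℕ, ∀ n ≥ N, ((F n).ncard : ℝ) ≤ Real.logb 2 n)
    (i : Bool) (f : V → ℕ) (hinj : Function.Injective f)
    (hmono : ∀ u v : V, G.Adj u v → radoColor (f u) (f v) = i) :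
    upperDensity (Set.range f) = 0 :=
  stmt_5_general G F hrul hdisj hsize i f hinj hmono
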